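/- Let U, V ∈ ℕ∖{1}, c ∈ (0,1), m ∈ ℕ and t > 0, and set α(c) = (9m)^{1/c}(UV)^{−t}. For every F ∈ RCO(U,V,m,t), the set F ∪ (ℝ²∖B[0,1]) is (α(c), A_{U,V}, c, 1, 1)-winning. -/

import Mathlib

open scoped ENNReal

/-- The axis-parallel closed box `A^t(B[0,r]) + y`, where `A` is the diagonal matrix with
diagonal entries `β j`: the set of `x` with `|x j - y j| ≤ (β j)^t * r` for every `j`. -/
def gameBox {n : ℕ} (β : Fin n → ℝ) (t r : ℝ) (y : Fin n → ℝ) : Set (Fin n → ℝ) :=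
  {x | ∀ j, |x j - y j| ≤ β j ^ t * r}

/-- A legal move of Player II on turn `m + 1` (turns are indexed from `1` in the paper) of the
`(α, A, c, ρ₂, ρ₁)`-potential game: an at most countable collection of pairs `(q, y)` with
`q ≥ 1`, satisfying, when `c > 0`,
`Σ (∏_j β_j^q)^c ≤ (α ∏_j β_j^(m+1))^c`, and, when `c = 0`, consisting of at most one pair
`(q, y)`, which must satisfy `∏_j β_j^q ≤ α ∏_j β_j^(m+1)`. The empty collection (a skip) is
always legal. -/
def LegalMove {n : ℕ} (β : Fin n → ℝ) (α c : ℝ) (m : ℕ)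
    (M : Set (ℝ × (Fin n → ℝ))) : Prop :=
  M.Countable ∧ (∀ p ∈ M, 1 ≤ p.1) ∧
    (if 0 < c then
      ∑' p : M, ENNReal.ofReal ((∏ j, β j ^ p.1.1) ^ c)
        ≤ ENNReal.ofReal ((α * ∏ j, β j ^ (m + 1 : ℝ)) ^ c)
    else
      M.Subsingleton ∧ ∀ p ∈ M, (∏ j, β j ^ p.1) ≤ α * ∏ j, β j ^ (m + 1 : ℝ))

/-- `S` is a winning set for Player II in the `(α, A, c, ρ₂, ρ₁)`-potential game, where `A` is
the diagonal matrix with diagonal entries `β j`.  Player I's play on turn `m + 1` is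
`U_{m+1} = A^{m+1}(B[0,r]) + b m` with `ρ₂ ≤ r ≤ ρ₁` and `U_{m+2} ⊆ U_{m+1}`; a strategy for
Player II assigns to every finite history (the radius `r` together with the centres
`b 0, …, b m` of Player I's plays so far) a collection of pairs `(q, y)`, which must be a legal
move whenever the history is legal.  The strategy is winning for `S` if for every legal infinite
play in which Player II follows it, every point `x` of `⋂ U_m` which avoids the deleted region
`⋃_m ⋃_{(q,y)} (A^q(B[0,r]) + y)` lies in `S`. -/
def IsWinning {n : ℕ} (β : Fin n → ℝ) (α c ρ₂ ρ₁ : ℝ) (S : Set (Fin n → ℝ)) : Prop :=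
  ∃ σ : ℝ → (m : ℕ) → (Fin (m + 1) → (Fin n → ℝ)) → Set (ℝ × (Fin n → ℝ)),
    (∀ (r : ℝ) (m : ℕ) (b : Fin (m + 1) → (Fin n → ℝ)),
      ρ₂ ≤ r → r ≤ ρ₁ →
      (∀ i : Fin m,
        gameBox β ((i : ℕ) + 2 : ℝ) r (b i.succ) ⊆ gameBox β ((i : ℕ) + 1 : ℝ) r (b i.castSucc)) →
      LegalMove β α c m (σ r m b)) ∧
    (∀ (r : ℝ) (b : ℕ → (Fin n → ℝ)),
      ρ₂ ≤ r → r ≤ ρ₁ →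
      (∀ m : ℕ, gameBox β ((m : ℕ) + 2 : ℝ) r (b (m + 1)) ⊆ gameBox β ((m : ℕ) + 1 : ℝ) r (b m)) →
      ∀ x : Fin n → ℝ, (∀ m : ℕ, x ∈ gameBox β ((m : ℕ) + 1 : ℝ) r (b m)) →
        x ∉ ⋃ (m : ℕ), ⋃ p ∈ σ r m (fun i : Fin (m + 1) => b (i : ℕ)), gameBox β p.1 r p.2 →
        x ∈ S)

/-- The family `𝒮(α, A, c, ρ₂)` of sets that are `(α, A, c, ρ₂, ρ₁)`-winning for some
`ρ₁ ≥ ρ₂`. -/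
def winFamily {n : ℕ} (β : Fin n → ℝ) (α c ρ₂ : ℝ) : Set (Set (Fin n → ℝ)) :=
  {S | ∃ ρ₁ : ℝ, ρ₂ ≤ ρ₁ ∧ IsWinning β α c ρ₂ ρ₁ S}

/-- The diagonal entries `(U⁻¹, V⁻¹)` of the matrix `A_{U,V}`. -/
noncomputable def AUV (U V : ℕ) : Fin 2 → ℝ := ![((U : ℝ))⁻¹, ((V : ℝ))⁻¹]

/-- The open axis-parallel box: interior of `gameBox`. -/
def gameBoxInt {n : ℕ} (β : Fin n → ℝ) (t r : ℝ) (y : Fin n → ℝ) : Set (Fin n → ℝ) :=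
  {x | ∀ j, |x j - y j| < β j ^ t * r}

/-- `F` belongs to the family `𝒞𝒪(U, V, m, t)`:  for each `k ∈ ℕ` (stage `k + 1` in the paper),
the square `B[0,1] = [-1,1]²` is partitioned into the `U^(k+1) · V^(k+1)` cells
`A_{U,V}^(k+1)(B[0,1]) + (cell centre)` of width `2U^{-(k+1)}` and height `2V^{-(k+1)}`; from the
cell with index `(i, j)` one removes `m` rectangles `A_{U,V}^(k+1+t)(B[0,1]) + ctr k (i,j) l`
(of width `2U^{-(k+1+t)}` and height `2V^{-(k+1+t)}`) contained in that cell, and `F` is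
`B[0,1]` minus the union over all stages of the interiors of all removed rectangles. -/
def RCO (U V m : ℕ) (t : ℝ) (F : Set (Fin 2 → ℝ)) : Prop :=
  ∃ ctr : ℕ → ℕ × ℕ → Fin m → (Fin 2 → ℝ),
    (∀ (k : ℕ), ∀ i < U ^ (k + 1), ∀ j < V ^ (k + 1), ∀ l : Fin m,
      gameBox (AUV U V) ((k + 1 : ℝ) + t) 1 (ctr k (i, j) l) ⊆
        gameBox (AUV U V) (k + 1 : ℝ) 1
          ![(-1 : ℝ) + (2 * i + 1) * ((U : ℝ))⁻¹ ^ (k + 1 : ℝ),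
            (-1 : ℝ) + (2 * j + 1) * ((V : ℝ))⁻¹ ^ (k + 1 : ℝ)]) ∧
    F = Metric.closedBall 0 1 \
        ⋃ (k : ℕ), ⋃ i ∈ Finset.range (U ^ (k + 1)), ⋃ j ∈ Finset.range (V ^ (k + 1)),
          ⋃ l : Fin m, gameBoxInt (AUV U V) ((k + 1 : ℝ) + t) 1 (ctr k (i, j) l)

/-- **Winning condition for `𝒞𝒪(U,V,m,t)` sets.** Let `U, V ∈ ℕ \ {0, 1}`, `c ∈ (0,1)`,
`m ∈ ℕ`, `t > 0`, and `α(c) = (9m)^(1/c) · (UV)^(-t)`.  For every `F ∈ 𝒞𝒪(U, V, m, t)`,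
the set `F ∪ (ℝ² \ B[0,1])` is `(α(c), A_{U,V}, c, 1, 1)`-winning. -/

lemma card_filter_interval_le_three (N : ℕ) (h a : ℝ) (hh : 0 < h) :
    ((Finset.range N).filter (fun i : ℕ =>
      |(-1 + (2 * (i : ℝ) + 1) * h) - a| ≤ 2 * h)).card ≤ 3 := by
  classical
  set s : ℝ := (a + 1) / h with hs
  set n : ℤ := ⌊(s + 1) / 2⌋ with hn
  have key : ∀ i ∈ (Finset.range N).filter (fun i : ℕ =>
      |(-1 + (2 * (i : ℝ) + 1) * h) - a| ≤ 2 * h),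
      (i : ℤ) ∈ Finset.Icc (n - 2) n := by
    intro i hi
    rw [Finset.mem_filter] at hi
    have habs := abs_le.1 hi.2
    have h1 : (2 * (i : ℝ) - 1) ≤ s := by
      rw [hs, le_div_iff₀ hh]; nlinarith [habs.2]
    have h2 : s ≤ 2 * (i : ℝ) + 3 := by
      rw [hs, div_le_iff₀ hh]; nlinarith [habs.1]
    have hup : (i : ℝ) ≤ (s + 1) / 2 := by linarith
    have hlow : (s + 1) / 2 ≤ (i : ℝ) + 2 := by linarith
    rw [Finset.mem_Icc]
    constructor
    · have hfl : n ≤ (i : ℤ) + 2 := by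
        rw [hn]
        have := Int.floor_le_floor (R := ℝ) hlow
        rwa [show ((i : ℝ) + 2) = (((i : ℤ) + 2 : ℤ) : ℝ) by push_cast; ring,
          Int.floor_intCast] at this
      omega
    · rw [hn]
      exact Int.le_floor.2 (by exact_mod_cast hup)
  calc ((Finset.range N).filter _).card ≤ (Finset.Icc (n - 2) n).card :=
        Finset.card_le_card_of_injOn (fun i => (i : ℤ)) key
          (fun a _ b _ hab => by simpa using hab)
    _ = 3 := by rw [Int.card_Icc]; simp

lemma budget_eq (U V m : ℕ) (hU : 2 ≤ U) (hV : 2 ≤ V) (c t : ℝ) (hc : 0 < c) (k : ℕ) :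
    ((9 * (m : ℝ)) ^ (1 / c) * ((U : ℝ) * V) ^ (-t) *
        (((U : ℝ))⁻¹ ^ ((k : ℝ) + 1) * ((V : ℝ))⁻¹ ^ ((k : ℝ) + 1))) ^ c
      = 9 * m * ((((U : ℝ))⁻¹ ^ ((k : ℝ) + 1 + t)) * (((V : ℝ))⁻¹ ^ ((k : ℝ) + 1 + t))) ^ c := by
  have hU0 : (0 : ℝ) < U := by exact_mod_cast (by omega : 0 < U)
  have hV0 : (0 : ℝ) < V := by exact_mod_cast (by omega : 0 < V)
  have ha : (0 : ℝ) < (U : ℝ) * V := by positivity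
  have e : ∀ s : ℝ, ((U : ℝ))⁻¹ ^ s * ((V : ℝ))⁻¹ ^ s = ((U : ℝ) * V) ^ (-s) := by
    intro s
    rw [← Real.mul_rpow (by positivity) (by positivity), ← mul_inv,
      Real.inv_rpow (by positivity), ← Real.rpow_neg ha.le]
  rw [e, e, mul_assoc, ← Real.rpow_add ha, Real.mul_rpow (by positivity) (by positivity),
    ← Real.rpow_mul (by positivity : (0:ℝ) ≤ 9 * m), one_div, inv_mul_cancel₀ hc.ne',
    Real.rpow_one]
  ring_nf

/-- The collection of pairs chosen by Player II on turn `k + 1`: the rectangles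
`ctr k (i, j) l` of stage `k` whose cell `(i, j)` is close to the current centre `b`. -/
noncomputable def stratSet (U V mm : ℕ) (t : ℝ) (ctr : ℕ → ℕ × ℕ → Fin mm → (Fin 2 → ℝ))
    (k : ℕ) (b : Fin 2 → ℝ) : Finset (ℝ × (Fin 2 → ℝ)) := by
  classical
  exact (((Finset.range (U ^ (k + 1))).filter fun i : ℕ =>
      |(-1 + (2 * (i : ℝ) + 1) * ((U : ℝ))⁻¹ ^ ((k : ℝ) + 1)) - b 0| ≤
        2 * ((U : ℝ))⁻¹ ^ ((k : ℝ) + 1)) ×ˢ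
   (((Finset.range (V ^ (k + 1))).filter fun j : ℕ =>
      |(-1 + (2 * (j : ℝ) + 1) * ((V : ℝ))⁻¹ ^ ((k : ℝ) + 1)) - b 1| ≤
        2 * ((V : ℝ))⁻¹ ^ ((k : ℝ) + 1)) ×ˢ
    (Finset.univ : Finset (Fin mm)))).image
    fun p => (((k : ℝ) + 1 + t), ctr k (p.1, p.2.1) p.2.2)

lemma stratSet_card (U V mm : ℕ) (t : ℝ) (ctr : ℕ → ℕ × ℕ → Fin mm → (Fin 2 → ℝ)) (k : ℕ)
    (b : Fin 2 → ℝ) (hU : (0:ℝ) < ((U : ℝ))⁻¹ ^ ((k:ℝ)+1)) (hV : (0:ℝ) < ((V : ℝ))⁻¹ ^ ((k:ℝ)+1)) :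
    (stratSet U V mm t ctr k b).card ≤ 9 * mm := by
  classical
  unfold stratSet
  refine le_trans (Finset.card_image_le) ?_
  rw [Finset.card_product, Finset.card_product, Finset.card_univ, Fintype.card_fin]
  calc _ ≤ 3 * (3 * mm) := by
        refine Nat.mul_le_mul (card_filter_interval_le_three _ _ _ hU)
          (Nat.mul_le_mul_right _ (card_filter_interval_le_three _ _ _ hV))
    _ = 9 * mm := by ring

lemma stratSet_mem {U V mm : ℕ} {t : ℝ} {ctr : ℕ → ℕ × ℕ → Fin mm → (Fin 2 → ℝ)} {k : ℕ}
    {b : Fin 2 → ℝ} {i j : ℕ} (l : Fin mm) (hi : i < U ^ (k + 1)) (hj : j < V ^ (k + 1))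
    (hi' : |(-1 + (2 * (i : ℝ) + 1) * ((U : ℝ))⁻¹ ^ ((k : ℝ) + 1)) - b 0| ≤
        2 * ((U : ℝ))⁻¹ ^ ((k : ℝ) + 1))
    (hj' : |(-1 + (2 * (j : ℝ) + 1) * ((V : ℝ))⁻¹ ^ ((k : ℝ) + 1)) - b 1| ≤
        2 * ((V : ℝ))⁻¹ ^ ((k : ℝ) + 1)) :
    (((k : ℝ) + 1 + t), ctr k (i, j) l) ∈ stratSet U V mm t ctr k b := by
  classical
  unfold stratSet
  refine Finset.mem_image.2 ⟨(i, j, l), ?_, rfl⟩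
  simp only [Finset.mem_product, Finset.mem_filter, Finset.mem_range, Finset.mem_univ]
  exact ⟨⟨hi, hi'⟩, ⟨hj, hj'⟩, trivial⟩

lemma stratSet_fst {U V mm : ℕ} {t : ℝ} {ctr : ℕ → ℕ × ℕ → Fin mm → (Fin 2 → ℝ)} {k : ℕ}
    {b : Fin 2 → ℝ} {p : ℝ × (Fin 2 → ℝ)} (hp : p ∈ stratSet U V mm t ctr k b) :
    p.1 = (k : ℝ) + 1 + t := by
  classical
  unfold stratSet at hp
  obtain ⟨q, -, rfl⟩ := Finset.mem_image.1 hp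
  rfl

theorem rco_winning (U V : ℕ) (hU : 2 ≤ U) (hV : 2 ≤ V)
    (c : ℝ) (hc : c ∈ Set.Ioo (0 : ℝ) 1) (m : ℕ) (hm : 1 ≤ m) (t : ℝ) (ht : 0 < t)
    (F : Set (Fin 2 → ℝ)) (hF : RCO U V m t F) :
    IsWinning (AUV U V) ((9 * (m : ℝ)) ^ (1 / c) * ((U : ℝ) * V) ^ (-t)) c 1 1
      (F ∪ (Set.univ \ Metric.closedBall 0 1)) := by
  classical
  obtain ⟨ctr, hctr, hFeq⟩ := hF
  have hU0 : (0 : ℝ) < U := by exact_mod_cast (by omega : 0 < U)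
  have hV0 : (0 : ℝ) < V := by exact_mod_cast (by omega : 0 < V)
  have hβ0 : ∀ k : ℕ, AUV U V 0 ^ ((k : ℝ) + 1) = ((U : ℝ))⁻¹ ^ ((k : ℝ) + 1) := by
    intro k; simp [AUV]
  have hβ1 : ∀ k : ℕ, AUV U V 1 ^ ((k : ℝ) + 1) = ((V : ℝ))⁻¹ ^ ((k : ℝ) + 1) := by
    intro k; simp [AUV]
  refine ⟨fun r k b => ↑(stratSet U V m t ctr k (b (Fin.last k))), ?_, ?_⟩
  · -- legality
    intro r k b _ _ _
    refine ⟨(stratSet U V m t ctr k (b (Fin.last k))).countable_toSet, ?_, ?_⟩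
    · intro p hp
      rw [stratSet_fst (Finset.mem_coe.1 hp)]
      have : (0 : ℝ) ≤ (k : ℝ) := Nat.cast_nonneg k
      linarith
    · rw [if_pos hc.1]
      set u : ℝ≥0∞ := ENNReal.ofReal
        ((((U : ℝ))⁻¹ ^ ((k : ℝ) + 1 + t) * ((V : ℝ))⁻¹ ^ ((k : ℝ) + 1 + t)) ^ c) with hu
      have hsum : ∑' p : ↑(stratSet U V m t ctr k (b (Fin.last k)) : Set (ℝ × (Fin 2 → ℝ))),
          ENNReal.ofReal ((∏ j, AUV U V j ^ (p : ℝ × (Fin 2 → ℝ)).1) ^ c)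
          = ∑ p ∈ stratSet U V m t ctr k (b (Fin.last k)),
              ENNReal.ofReal ((∏ j, AUV U V j ^ p.1) ^ c) :=
        Finset.tsum_subtype' (stratSet U V m t ctr k (b (Fin.last k))) (fun q => ENNReal.ofReal ((∏ j, AUV U V j ^ q.1) ^ c))
      calc ∑' p : ↑(stratSet U V m t ctr k (b (Fin.last k)) : Set (ℝ × (Fin 2 → ℝ))),
            ENNReal.ofReal ((∏ j, AUV U V j ^ (p : ℝ × (Fin 2 → ℝ)).1) ^ c)
          = ∑ p ∈ stratSet U V m t ctr k (b (Fin.last k)),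
              ENNReal.ofReal ((∏ j, AUV U V j ^ p.1) ^ c) := hsum
        _ ≤ (stratSet U V m t ctr k (b (Fin.last k))).card • u := by
            refine Finset.sum_le_card_nsmul _ _ _ ?_
            intro p hp
            rw [stratSet_fst hp, hu]
            apply le_of_eq
            congr 1
            rw [Fin.prod_univ_two]
            simp [AUV]
        _ ≤ (9 * m) • u := by
            rw [nsmul_eq_mul, nsmul_eq_mul]
            refine mul_le_mul_left ?_ u
            exact_mod_cast stratSet_card U V m t ctr k (b (Fin.last k))
              (by positivity) (by positivity)
        _ ≤ ENNReal.ofReal (((9 * (m : ℝ)) ^ (1 / c) * ((U : ℝ) * V) ^ (-t) *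
              ∏ j, AUV U V j ^ ((k : ℕ) + 1 : ℝ)) ^ c) := by
            rw [hu, nsmul_eq_mul, show ((9 * m : ℕ) : ℝ≥0∞) = ENNReal.ofReal ((9 * m : ℕ) : ℝ) from
              (ENNReal.ofReal_natCast _).symm, ← ENNReal.ofReal_mul (by positivity)]
            refine ENNReal.ofReal_le_ofReal (le_of_eq ?_)
            have hprod : ∏ j, AUV U V j ^ ((k : ℕ) + 1 : ℝ)
                = ((U : ℝ))⁻¹ ^ ((k : ℝ) + 1) * ((V : ℝ))⁻¹ ^ ((k : ℝ) + 1) := by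
              rw [Fin.prod_univ_two]; simp [AUV]
            rw [hprod, budget_eq U V m hU hV c t hc.1 k]
            push_cast
            ring
  · -- winning
    intro r b hr1 hr2 hnest x hx hdel
    have hr : r = 1 := le_antisymm hr2 hr1
    subst hr
    by_cases hball : x ∈ Metric.closedBall (0 : Fin 2 → ℝ) 1
    · left
      rw [hFeq]
      refine ⟨hball, fun hxE => ?_⟩
      simp only [Set.mem_iUnion, Finset.mem_range] at hxE
      obtain ⟨k, i, hi, j, hj, l, hxint⟩ := hxE
      have hxcl : x ∈ gameBox (AUV U V) ((k + 1 : ℝ) + t) 1 (ctr k (i, j) l) :=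
        fun j' => (hxint j').le
      have hcell := hctr k i hi j hj l hxcl
      have hxk := hx k
      have hi' : |(-1 + (2 * (i : ℝ) + 1) * ((U : ℝ))⁻¹ ^ ((k : ℝ) + 1)) - b k 0| ≤
          2 * ((U : ℝ))⁻¹ ^ ((k : ℝ) + 1) := by
        have h1 := hcell 0
        have h2 := hxk 0
        simp only [Matrix.cons_val_zero] at h1
        rw [hβ0 k, mul_one] at h1 h2
        have : (-1 + (2 * (i : ℝ) + 1) * ((U : ℝ))⁻¹ ^ ((k : ℝ) + 1)) - b k 0 =
            -(x 0 - (-1 + (2 * (i : ℝ) + 1) * ((U : ℝ))⁻¹ ^ ((k : ℝ) + 1))) + (x 0 - b k 0) := by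
          ring
        rw [this]
        calc _ ≤ |-(x 0 - (-1 + (2 * (i : ℝ) + 1) * ((U : ℝ))⁻¹ ^ ((k : ℝ) + 1)))| +
              |x 0 - b k 0| := abs_add_le _ _
          _ ≤ _ := by rw [abs_neg]; linarith
      have hj' : |(-1 + (2 * (j : ℝ) + 1) * ((V : ℝ))⁻¹ ^ ((k : ℝ) + 1)) - b k 1| ≤
          2 * ((V : ℝ))⁻¹ ^ ((k : ℝ) + 1) := by
        have h1 := hcell 1
        have h2 := hxk 1
        simp only [Matrix.cons_val_one, Matrix.head_cons, Matrix.cons_val_zero] at h1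
        rw [hβ1 k, mul_one] at h1 h2
        have : (-1 + (2 * (j : ℝ) + 1) * ((V : ℝ))⁻¹ ^ ((k : ℝ) + 1)) - b k 1 =
            -(x 1 - (-1 + (2 * (j : ℝ) + 1) * ((V : ℝ))⁻¹ ^ ((k : ℝ) + 1))) + (x 1 - b k 1) := by
          ring
        rw [this]
        calc _ ≤ |-(x 1 - (-1 + (2 * (j : ℝ) + 1) * ((V : ℝ))⁻¹ ^ ((k : ℝ) + 1)))| +
              |x 1 - b k 1| := abs_add_le _ _
          _ ≤ _ := by rw [abs_neg]; linarith
      apply hdel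
      refine Set.mem_iUnion.2 ⟨k, Set.mem_iUnion₂.2
        ⟨(((k : ℝ) + 1 + t), ctr k (i, j) l), ?_, hxcl⟩⟩
      exact Finset.mem_coe.2 (by
        have := stratSet_mem (U := U) (V := V) (ctr := ctr) (t := t)
          (b := (fun i' : Fin (k + 1) => b i') (Fin.last k)) l hi hj ?_ ?_
        · exact this
        · simpa using hi'
        · simpa using hj')
    · exact Or.inr ⟨trivial, hball⟩
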